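/- Let ℓ(s) = 1 + |log s|, ℓℓ(s) = 1 + log ℓ(s) and ℓℓℓ(s) = 1 + log ℓℓ(s). For q ∈ (1,∞], one has ‖s^{-1/q'} ℓ(s)^{-1/q'} ℓℓ(s)^{-1/q'}‖_{L^{q'}(r, 1-r)} ≈ ℓℓℓ(r)^{1/q'} near 0, with constants independent of r. -/

import Mathlib

/-!
Since `q' < ∞`, the `q'`-th power of the weight is `1 / (s ℓ(s) ℓℓ(s)) = -ℓℓℓ'(s)` on `(0, 1)`,
so the norm is exactly `(ℓℓℓ(r) - ℓℓℓ(1 - r))^{1/q'}`. As `r → 0⁺`, `ℓℓℓ(r) → ∞` while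
`ℓℓℓ(1 - r) ∈ [1, 2]`, so once `ℓℓℓ(r) ≥ 4` the difference lies between `ℓℓℓ(r) / 2` and `ℓℓℓ(r)`.
-/

open MeasureTheory Set Filter Topology
open scoped ENNReal

noncomputable def ell (s : ℝ) : ℝ := 1 + |Real.log s|
noncomputable def ellell (s : ℝ) : ℝ := 1 + Real.log (ell s)
noncomputable def ellellell (s : ℝ) : ℝ := 1 + Real.log (ellell s)

lemma one_add_log_le_self {x : ℝ} (hx : 0 < x) : 1 + Real.log x ≤ x := by
  linarith [Real.log_le_sub_one_of_pos hx]

lemma one_le_ell (s : ℝ) : 1 ≤ ell s :=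
  le_add_of_nonneg_right (abs_nonneg _)

lemma one_le_ellell (s : ℝ) : 1 ≤ ellell s :=
  le_add_of_nonneg_right (Real.log_nonneg (one_le_ell s))

lemma one_le_ellellell (s : ℝ) : 1 ≤ ellellell s :=
  le_add_of_nonneg_right (Real.log_nonneg (one_le_ellell s))

lemma ell_pos (s : ℝ) : 0 < ell s := one_pos.trans_le (one_le_ell s)

lemma ellell_pos (s : ℝ) : 0 < ellell s := one_pos.trans_le (one_le_ellell s)

lemma ellell_le_ell (s : ℝ) : ellell s ≤ ell s := one_add_log_le_self (ell_pos s)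

lemma ellellell_le_ellell (s : ℝ) : ellellell s ≤ ellell s := one_add_log_le_self (ellell_pos s)

lemma ell_of_mem_Ioo {s : ℝ} (hs : s ∈ Ioo (0 : ℝ) 1) : ell s = 1 - Real.log s := by
  rw [ell, abs_of_neg (Real.log_neg hs.1 hs.2), sub_eq_add_neg]

lemma ellellell_le_two {s : ℝ} (hs : 1 / 2 ≤ s) (hs1 : s < 1) : ellellell s ≤ 2 := by
  have hlog : -Real.log s ≤ 1 := by
    rw [← Real.log_inv]
    have : s⁻¹ ≤ 2 := by rw [inv_le_comm₀ (by linarith) two_pos]; linarith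
    linarith [Real.log_le_sub_one_of_pos (inv_pos.2 (by linarith : 0 < s))]
  calc ellellell s ≤ ellell s := ellellell_le_ellell s
    _ ≤ ell s := ellell_le_ell s
    _ ≤ 2 := by rw [ell_of_mem_Ioo ⟨by linarith, hs1⟩]; linarith

lemma tendsto_ellellell_nhdsGT_zero : Tendsto ellellell (𝓝[>] 0) atTop := by
  have hell : Tendsto ell (𝓝[>] 0) atTop :=
    tendsto_atTop_add_const_left _ 1 (tendsto_abs_atBot_atTop.comp Real.tendsto_log_nhdsGT_zero)
  have hellell : Tendsto ellell (𝓝[>] 0) atTop :=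
    tendsto_atTop_add_const_left _ 1 (Real.tendsto_log_atTop.comp hell)
  exact tendsto_atTop_add_const_left _ 1 (Real.tendsto_log_atTop.comp hellell)

section Derivatives

variable {s : ℝ} (hs : s ∈ Ioo (0 : ℝ) 1)
include hs

lemma hasDerivAt_ell : HasDerivAt ell (-s⁻¹) s := by
  have heq : (fun t => 1 - Real.log t) =ᶠ[𝓝 s] ell :=
    eventually_of_mem (isOpen_Ioo.mem_nhds hs) fun t ht => (ell_of_mem_Ioo ht).symm
  exact ((Real.hasDerivAt_log hs.1.ne').const_sub 1).congr_of_eventuallyEq heq.symm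

lemma hasDerivAt_ellell : HasDerivAt ellell (-s⁻¹ / ell s) s :=
  ((hasDerivAt_ell hs).log (ell_pos s).ne').const_add 1

lemma hasDerivAt_ellellell : HasDerivAt ellellell (-(s * ell s * ellell s)⁻¹) s := by
  refine (((hasDerivAt_ellell hs).log (ellell_pos s).ne').const_add 1).congr_deriv ?_
  simp only [div_eq_mul_inv, mul_inv, neg_mul]

end Derivatives

lemma continuousOn_inv_mul_ell_mul_ellell :
    ContinuousOn (fun s => (s * ell s * ellell s)⁻¹) (Ioo 0 1) := fun s hs =>
  (((continuousAt_id.mul (hasDerivAt_ell hs).continuousAt).mul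
    (hasDerivAt_ellell hs).continuousAt).inv₀
      (mul_pos (mul_pos hs.1 (ell_pos s)) (ellell_pos s)).ne').continuousWithinAt

lemma integral_Ioo_inv_mul_ell_mul_ellell {a b : ℝ} (ha : 0 < a) (hab : a ≤ b) (hb : b < 1) :
    ∫ s in Ioo a b, (s * ell s * ellell s)⁻¹ = ellellell a - ellellell b := by
  have hsub : uIcc a b ⊆ Ioo 0 1 := by
    rw [uIcc_of_le hab]; exact Icc_subset_Ioo ha hb
  have hftc := intervalIntegral.integral_eq_sub_of_hasDerivAt
    (fun s hs => hasDerivAt_ellellell (hsub hs))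
    (continuousOn_inv_mul_ell_mul_ellell.mono hsub).intervalIntegrable.neg
  rw [intervalIntegral.integral_neg] at hftc
  rw [← integral_Ioc_eq_integral_Ioo, ← intervalIntegral.integral_of_le hab]
  linarith

lemma eLpNorm_rpow_toReal_inv {α : Type*} [MeasurableSpace α] {μ : Measure α} {p : ℝ≥0∞}
    (hp0 : p ≠ 0) (hp : p ≠ ∞) {g : α → ℝ} (hg : 0 ≤ᵐ[μ] g) (hint : Integrable g μ) :
    eLpNorm (fun x => g x ^ p.toReal⁻¹) p μ = ENNReal.ofReal ((∫ x, g x ∂μ) ^ p.toReal⁻¹) := by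
  have hp' : 0 < p.toReal := ENNReal.toReal_pos hp0 hp
  rw [eLpNorm_eq_lintegral_rpow_enorm_toReal hp0 hp, one_div,
    ← ENNReal.ofReal_rpow_of_nonneg (integral_nonneg_of_ae hg) (inv_nonneg.2 hp'.le),
    ofReal_integral_eq_lintegral_ofReal hint hg]
  refine congrArg (· ^ p.toReal⁻¹) (lintegral_congr_ae (hg.mono fun x hx => ?_))
  have hx' : 0 ≤ g x ^ p.toReal⁻¹ := Real.rpow_nonneg hx _
  dsimp only
  rw [Real.enorm_eq_ofReal hx', ENNReal.ofReal_rpow_of_nonneg hx' hp'.le, ← Real.rpow_mul hx,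
    inv_mul_cancel₀ hp'.ne', Real.rpow_one]

lemma eLpNorm_weight_restrict_Ioo {p : ℝ≥0∞} (hp0 : p ≠ 0) (hp : p ≠ ∞) {a b : ℝ} (ha : 0 < a)
    (hab : a ≤ b) (hb : b < 1) :
    eLpNorm (fun s : ℝ => s ^ (-(1 / p).toReal) * ell s ^ (-(1 / p).toReal) *
        ellell s ^ (-(1 / p).toReal)) p (volume.restrict (Ioo a b)) =
      ENNReal.ofReal ((ellellell a - ellellell b) ^ (1 / p).toReal) := by
  have hexp : (1 / p).toReal = p.toReal⁻¹ := by rw [one_div, ENNReal.toReal_inv]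
  have hpos : ∀ s ∈ Ioo a b, 0 < s * ell s * ellell s := fun s hs =>
    mul_pos (mul_pos (ha.trans hs.1) (ell_pos s)) (ellell_pos s)
  have hweight : (fun s : ℝ => s ^ (-(1 / p).toReal) * ell s ^ (-(1 / p).toReal) *
      ellell s ^ (-(1 / p).toReal)) =ᵐ[volume.restrict (Ioo a b)]
        fun s => (s * ell s * ellell s)⁻¹ ^ p.toReal⁻¹ := by
    filter_upwards [ae_restrict_mem measurableSet_Ioo] with s hs
    rw [hexp, Real.inv_rpow (hpos s hs).le, ← Real.rpow_neg (hpos s hs).le,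
      Real.mul_rpow (mul_pos (ha.trans hs.1) (ell_pos s)).le (ellell_pos s).le,
      Real.mul_rpow (ha.trans hs.1).le (ell_pos s).le]
  have hnonneg : 0 ≤ᵐ[volume.restrict (Ioo a b)] fun s => (s * ell s * ellell s)⁻¹ := by
    filter_upwards [ae_restrict_mem measurableSet_Ioo] with s hs
    exact inv_nonneg.2 (hpos s hs).le
  have hint : IntegrableOn (fun s => (s * ell s * ellell s)⁻¹) (Ioo a b) :=
    ((continuousOn_inv_mul_ell_mul_ellell.mono (Icc_subset_Ioo ha hb)).integrableOn_Icc).mono_set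
      Ioo_subset_Icc_self
  rw [eLpNorm_congr_ae hweight, eLpNorm_rpow_toReal_inv hp0 hp hnonneg hint,
    integral_Ioo_inv_mul_ell_mul_ellell ha hab hb, hexp]

/-- For `q ∈ (1,∞]`:
`‖s^{-1/q'} ℓ(s)^{-1/q'} ℓℓ(s)^{-1/q'}‖_{L^{q'}(r,1-r)} ≈ ℓℓℓ(r)^{1/q'}` near `0`. -/
theorem stmt13 (q q' : ℝ≥0∞) (hq : 1 < q) (hconj : 1 / q + 1 / q' = 1) :
    ∃ c C r₀ : ℝ, 0 < c ∧ 0 < C ∧ 0 < r₀ ∧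
      ∀ r ∈ Set.Ioo (0 : ℝ) r₀,
        ENNReal.ofReal (c * ellellell r ^ (1 / q').toReal) ≤
            eLpNorm (fun s : ℝ =>
                s ^ (-(1 / q').toReal) * ell s ^ (-(1 / q').toReal) *
                  ellell s ^ (-(1 / q').toReal))
              q' (volume.restrict (Set.Ioo r (1 - r))) ∧
          eLpNorm (fun s : ℝ =>
                s ^ (-(1 / q').toReal) * ell s ^ (-(1 / q').toReal) *
                  ellell s ^ (-(1 / q').toReal))
              q' (volume.restrict (Set.Ioo r (1 - r))) ≤
            ENNReal.ofReal (C * ellellell r ^ (1 / q').toReal) := by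
  have : q.HolderConjugate q' := ENNReal.holderConjugate_iff.2 (by simpa only [one_div] using hconj)
  have hq'0 : q' ≠ 0 := ENNReal.HolderConjugate.ne_zero q' q
  have hq'top : q' ≠ ∞ := ((ENNReal.HolderConjugate.lt_top_iff_one_lt q' q).2 hq).ne
  have hexp : 0 < (1 / q').toReal := ENNReal.toReal_pos (by simpa using hq'top) (by simpa using hq'0)
  obtain ⟨r₁, hr₁, hlarge⟩ : ∃ r₁ > 0, Ioo 0 r₁ ⊆ {r | 4 ≤ ellellell r} :=
    mem_nhdsGT_iff_exists_Ioo_subset.1 (tendsto_ellellell_nhdsGT_zero.eventually_ge_atTop 4)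
  refine ⟨(1 / 2) ^ (1 / q').toReal, 1, min r₁ (1 / 2), by positivity, one_pos,
    lt_min hr₁ one_half_pos, fun r ⟨hr0, hr⟩ => ?_⟩
  have hr_half : r < 1 / 2 := hr.trans_le (min_le_right _ _)
  have hL : 4 ≤ ellellell r := hlarge ⟨hr0, hr.trans_le (min_le_left _ _)⟩
  have hM : ellellell (1 - r) ≤ 2 := ellellell_le_two (by linarith) (by linarith)
  have hM' : 1 ≤ ellellell (1 - r) := one_le_ellellell (1 - r)
  rw [eLpNorm_weight_restrict_Ioo hq'0 hq'top hr0 (by linarith) (by linarith)]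
  constructor
  · rw [← Real.mul_rpow one_half_pos.le (by linarith)]
    exact ENNReal.ofReal_le_ofReal (Real.rpow_le_rpow (by linarith) (by linarith) hexp.le)
  · rw [one_mul]
    exact ENNReal.ofReal_le_ofReal (Real.rpow_le_rpow (by linarith) (by linarith) hexp.le)
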